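/- On the domain D = {(x,y) : -√2 ≤ x ≤ 0, -√2 ≤ y ≤ 0, y ≤ x² - 2}, the map g with components g₁(x,y) = -√(2 - (2+x)/√(2 + (2+y)/x)) and g₂(x,y) = -√(2 + (2+y)/x) is monotone for the coordinatewise partial order: if p, q ∈ D and p ≤ q componentwise, then g(p) ≤ g(q) componentwise. -/
import Mathlib


/-- The local inverse `g` of the period-doubling trace map. -/
noncomputable def pdG : ℝ × ℝ → ℝ × ℝ := fun p =>
  (-Real.sqrt (2 - (2 + p.1) / Real.sqrt (2 + (2 + p.2) / p.1)),
    -Real.sqrt (2 + (2 + p.2) / p.1))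

/-- The compact "triangle" `D`. -/
noncomputable def pdD : Set (ℝ × ℝ) :=
  {p | -Real.sqrt 2 ≤ p.1 ∧ p.1 ≤ 0 ∧ -Real.sqrt 2 ≤ p.2 ∧ p.2 ≤ 0 ∧
    p.2 ≤ p.1 ^ 2 - 2}

/-- `g` is monotone on `D` for the coordinatewise partial order. -/
theorem pdG_monotone_on_D :
    ∀ p ∈ pdD, ∀ q ∈ pdD, p.1 ≤ q.1 → p.2 ≤ q.2 →
      (pdG p).1 ≤ (pdG q).1 ∧ (pdG p).2 ≤ (pdG q).2 := by
  have h2 : Real.sqrt 2 < 2 := by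
    nlinarith [Real.sq_sqrt (by norm_num : (0:ℝ) ≤ 2), Real.sqrt_nonneg 2]
  rintro ⟨x₁, y₁⟩ ⟨hx1l, hx1u, hy1l, hy1u, hP1⟩
  rintro ⟨x₂, y₂⟩ ⟨hx2l, hx2u, hy2l, hy2u, hP2⟩ hx hy
  simp only [pdG]
  have hx1 : x₁ < 0 := by nlinarith
  have hx2 : x₂ < 0 := by nlinarith
  have h2y1 : (0:ℝ) < 2 + y₁ := by linarith
  have h2y2 : (0:ℝ) < 2 + y₂ := by linarith
  -- the inner quotients compare
  have hu : (2 + y₂) / x₂ ≤ (2 + y₁) / x₁ := by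
    have e1 : (2 + y₂) / x₂ = (-(2 + y₂)) / (-x₂) := by ring
    have e2 : (2 + y₁) / x₁ = (-(2 + y₁)) / (-x₁) := by ring
    rw [e1, e2, div_le_div_iff₀ (by linarith) (by linarith)]
    nlinarith
  -- the inner quotient is bounded below by x
  have hq1 : x₁ ≤ (2 + y₁) / x₁ := by
    rw [le_div_iff_of_neg hx1]
    nlinarith
  have hq2 : x₂ ≤ (2 + y₂) / x₂ := by
    rw [le_div_iff_of_neg hx2]
    nlinarith
  have hin2 : (0:ℝ) < 2 + (2 + y₂) / x₂ := by linarith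
  have hs2 : 0 < Real.sqrt (2 + (2 + y₂) / x₂) := Real.sqrt_pos.mpr hin2
  have hs12 : Real.sqrt (2 + (2 + y₂) / x₂) ≤ Real.sqrt (2 + (2 + y₁) / x₁) :=
    Real.sqrt_le_sqrt (by linarith)
  constructor
  · apply neg_le_neg
    apply Real.sqrt_le_sqrt
    have hratio : (2 + x₁) / Real.sqrt (2 + (2 + y₁) / x₁)
        ≤ (2 + x₂) / Real.sqrt (2 + (2 + y₂) / x₂) :=
      div_le_div₀ (by linarith) (by linarith) hs2 hs12
    linarith
  · exact neg_le_neg hs12
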